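/- arXiv:1202.4075 — 3 statements merged into one kernel-verified Lean document; each statement's English description precedes it below -/
import Mathlib

section
/- In the game Max-Welter, a position (a_1, ..., a_k) with k ≥ 2 and a_1 < a_2 < ... < a_k is a P-position (previous player wins, i.e., the player to move loses) if and only if a_k = a_{k-1} + 1 and a_{k-1} + k is even. -/
/-- A move in Max-Welter: the coin on the largest occupied square moves to an
empty square strictly to its left. -/
def MWMove (s t : Finset ℕ) : Prop :=
  ∃ (hs : s.Nonempty) (j : ℕ), j < s.max' hs ∧ j ∉ s ∧
    t = insert j (s.erase (s.max' hs))

theorem MWMove.sum_lt {s t : Finset ℕ} (h : MWMove s t) :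
    t.sum id < s.sum id := by
  obtain ⟨hs, j, hj, hjs, rfl⟩ := h
  have hm : s.max' hs ∈ s := s.max'_mem hs
  have hje : j ∉ s.erase (s.max' hs) := fun hc => hjs (Finset.mem_of_mem_erase hc)
  have h2 : (s.erase (s.max' hs)).sum id + s.max' hs = s.sum id :=
    Finset.sum_erase_add s id hm
  rw [Finset.sum_insert hje]
  simp only [id] at *
  omega

/-- Normal-play Sprague-Grundy value of a Max-Welter position. -/
noncomputable def grundy (s : Finset ℕ) : ℕ :=
  sInf {n : ℕ | ∀ t, ∀ _h : MWMove s t, grundy t ≠ n}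
termination_by s.sum id
decreasing_by exact _h.sum_lt

open Classical in
/-- Misère Sprague-Grundy value: terminal positions get value 1. -/
noncomputable def mgrundy (s : Finset ℕ) : ℕ :=
  if ∀ t, ¬ MWMove s t then 1
  else sInf {n : ℕ | ∀ t, ∀ _h : MWMove s t, mgrundy t ≠ n}
termination_by s.sum id
decreasing_by exact _h.sum_lt

/-- Normal play: `s` is a P-position iff every move leads to a non-P-position. -/
def MWPPos (s : Finset ℕ) : Prop :=
  ∀ t, ∀ _h : MWMove s t, ¬ MWPPos t
termination_by s.sum id
decreasing_by exact _h.sum_lt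

/-- Misère play: the player to move wins iff there is no move (the opponent made
the last move and loses), or some move leads to a position losing for the opponent. -/
def MWMisereWin (s : Finset ℕ) : Prop :=
  (∀ t, ¬ MWMove s t) ∨ ∃ t, ∃ _h : MWMove s t, ¬ MWMisereWin t
termination_by s.sum id
decreasing_by exact _h.sum_lt



/-- Auxiliary: a move preserves the number of coins. -/
theorem MWMove.card_eq {s t : Finset ℕ} (h : MWMove s t) : t.card = s.card := by
  obtain ⟨hs, j, hj, hjs, rfl⟩ := h
  have hje : j ∉ s.erase (s.max' hs) := fun hc => hjs (Finset.mem_of_mem_erase hc)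
  rw [Finset.card_insert_of_notMem hje, Finset.card_erase_of_mem (s.max'_mem hs)]
  have : 1 ≤ s.card := Finset.card_pos.mpr hs
  omega

/-- The combinatorial predicate characterizing P-positions. -/
def MWQ (s : Finset ℕ) : Prop :=
  ∃ m, m ∈ s ∧ m + 1 ∈ s ∧ (∀ x ∈ s, x ≤ m + 1) ∧ Even (m + s.card)

theorem MWQ_step1 {s : Finset ℕ} (hQ : MWQ s) {t : Finset ℕ} (h : MWMove s t) :
    ¬ MWQ t := by
  obtain ⟨m, hm, hm1, hub, hev⟩ := hQ
  obtain ⟨hs, j, hj, hjs, rfl⟩ := h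
  have hcard := MWMove.card_eq ⟨hs, j, hj, hjs, rfl⟩
  have hMle : s.max' hs ≤ m + 1 := Finset.max'_le _ _ _ hub
  have hMge : m + 1 ≤ s.max' hs := Finset.le_max' _ _ hm1
  have hM : s.max' hs = m + 1 := le_antisymm hMle hMge
  rw [hM] at hj hcard ⊢
  -- j < m + 1, j ∉ s, so j < m
  have hjm : j < m := by
    rcases lt_or_eq_of_le (Nat.lt_succ_iff.mp hj) with h' | h'
    · exact h'
    · exact absurd (h' ▸ hm) hjs
  rintro ⟨m', hm', hm'1, hub', hev'⟩
  -- all elements of t are ≤ m, and m ∈ t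
  have hmt : m ∈ insert j (s.erase (m + 1)) :=
    Finset.mem_insert_of_mem (Finset.mem_erase.mpr ⟨by omega, hm⟩)
  have hubm : ∀ x ∈ insert j (s.erase (m + 1)), x ≤ m := by
    intro x hx
    rcases Finset.mem_insert.mp hx with rfl | hx
    · omega
    · obtain ⟨hx1, hx2⟩ := Finset.mem_erase.mp hx
      have := hub x hx2
      omega
  have h1 : m' + 1 ≤ m := hubm _ hm'1
  have h2 : m ≤ m' + 1 := hub' _ hmt
  have hmm : m' + 1 = m := le_antisymm h1 h2
  rw [hcard] at hev'
  obtain ⟨p, hp⟩ := hev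
  obtain ⟨q, hq⟩ := hev'
  omega

theorem MWQ_step2 {s : Finset ℕ} (hcard : 2 ≤ s.card) (hQ : ¬ MWQ s) :
    ∃ t, MWMove s t ∧ MWQ t := by
  have hs : s.Nonempty := Finset.card_pos.mp (by omega)
  obtain ⟨M, hMdef⟩ : ∃ M, s.max' hs = M := ⟨_, rfl⟩
  have hMmem : M ∈ s := hMdef ▸ s.max'_mem hs
  have hMub : ∀ x ∈ s, x ≤ M := fun x hx => hMdef ▸ Finset.le_max' _ _ hx
  have hs' : (s.erase M).Nonempty := by
    rw [← Finset.card_pos, Finset.card_erase_of_mem hMmem]; omega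
  obtain ⟨m, hmdef⟩ : ∃ m, (s.erase M).max' hs' = m := ⟨_, rfl⟩
  have hmmem' : m ∈ s.erase M := hmdef ▸ (s.erase M).max'_mem hs'
  have hmne : m ≠ M := (Finset.mem_erase.mp hmmem').1
  have hmmem : m ∈ s := (Finset.mem_erase.mp hmmem').2
  have hmM : m < M := lt_of_le_of_ne (hMub _ hmmem) hmne
  have hub2 : ∀ x ∈ s, x ≠ M → x ≤ m := fun x hx hxM =>
    hmdef ▸ Finset.le_max' _ _ (Finset.mem_erase.mpr ⟨hxM, hx⟩)
  by_cases hev : Even (m + s.card)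
  · -- then M ≥ m + 2 (else MWQ s holds with witness m); move to m+1
    have hm1 : m + 1 ∉ s := by
      intro hc
      apply hQ
      have hM1 : M = m + 1 := by
        rcases eq_or_ne (m+1) M with h' | h'
        · omega
        · have := hub2 _ hc h'; omega
      exact ⟨m, hmmem, hM1 ▸ hMmem, fun x hx => hM1 ▸ hMub x hx, hev⟩
    have hM2 : m + 1 < M := lt_of_le_of_ne hmM (fun h => hm1 (h ▸ hMmem))
    rw [← hMdef] at hM2
    refine ⟨insert (m+1) (s.erase (s.max' hs)), ⟨hs, m+1, hM2, hm1, rfl⟩, m, ?_, ?_, ?_, ?_⟩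
    · rw [hMdef]
      exact Finset.mem_insert_of_mem (Finset.mem_erase.mpr ⟨hmne, hmmem⟩)
    · exact Finset.mem_insert_self _ _
    · intro x hx
      rcases Finset.mem_insert.mp hx with rfl | hx
      · omega
      · rw [hMdef] at hx
        exact Nat.le_succ_of_le (hub2 _ (Finset.mem_erase.mp hx).2 (Finset.mem_erase.mp hx).1)
    · rw [MWMove.card_eq ⟨hs, m+1, hM2, hm1, rfl⟩]
      exact hev
  · -- m + card odd; find j < m with j ∉ s landing on a P-position
    have hm1 : 1 ≤ m := by
      by_contra h
      have hm0 : m = 0 := by omega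
      have hsub : s ⊆ ({0, M} : Finset ℕ) := by
        intro x hx
        rcases eq_or_ne x M with rfl | hxM
        · exact Finset.mem_insert_of_mem (Finset.mem_singleton_self _)
        · have h1 := hub2 x hx hxM
          have h2 : x = 0 := by omega
          exact h2 ▸ Finset.mem_insert_self _ _
      have h3 := Finset.card_le_card hsub
      have h2 : ({0, M} : Finset ℕ).card ≤ 2 := Finset.card_insert_le _ _
      have h4 : s.card = 2 := by omega
      exact hev ⟨1, by omega⟩
    obtain ⟨p, rfl⟩ : ∃ p, m = p + 1 := ⟨m - 1, by omega⟩
    have hkey : ∃ j, j ∉ s ∧ j < p + 1 ∧ (j = p ∨ p ∈ s) := by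
      by_cases hp : p ∈ s
      · by_cases hall : ∀ j, j < p + 1 → j ∈ s
        · exfalso
          have hsub : s = insert M (Finset.range (p + 2)) := by
            apply Finset.Subset.antisymm
            · intro x hx
              rcases eq_or_ne x M with rfl | hxM
              · exact Finset.mem_insert_self _ _
              · exact Finset.mem_insert_of_mem (Finset.mem_range.mpr (by
                  have := hub2 x hx hxM; omega))
            · intro x hx
              rcases Finset.mem_insert.mp hx with rfl | hx
              · exact hMmem
              · have hxr := Finset.mem_range.mp hx
                rcases Nat.lt_or_ge x (p + 1) with h' | h'
                · exact hall x h'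
                · have : x = p + 1 := by omega
                  exact this ▸ hmmem
          have hMr : M ∉ Finset.range (p + 2) := by
            rw [Finset.mem_range]; omega
          have hc : s.card = p + 3 := by
            rw [hsub, Finset.card_insert_of_notMem hMr, Finset.card_range]
          exact hev ⟨p + 2, by omega⟩
        · push_neg at hall
          obtain ⟨j, h1, h2⟩ := hall
          exact ⟨j, h2, h1, Or.inr hp⟩
      · exact ⟨p, hp, by omega, Or.inl rfl⟩
    obtain ⟨j, hjs, hjp, hor⟩ := hkey
    have hjltM : j < s.max' hs := by omega
    refine ⟨insert j (s.erase (s.max' hs)), ⟨hs, j, hjltM, hjs, rfl⟩, p, ?_, ?_, ?_, ?_⟩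
    · rcases hor with rfl | hps
      · exact Finset.mem_insert_self _ _
      · rw [hMdef]
        exact Finset.mem_insert_of_mem (Finset.mem_erase.mpr ⟨by omega, hps⟩)
    · rw [hMdef]
      exact Finset.mem_insert_of_mem (Finset.mem_erase.mpr ⟨by omega, hmmem⟩)
    · intro x hx
      rcases Finset.mem_insert.mp hx with rfl | hx
      · omega
      · rw [hMdef] at hx
        exact hub2 _ (Finset.mem_erase.mp hx).2 (Finset.mem_erase.mp hx).1
    · rw [MWMove.card_eq ⟨hs, j, hjltM, hjs, rfl⟩]
      rcases Nat.even_or_odd (p + s.card) with h | h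
      · exact h
      · exfalso
        apply hev
        obtain ⟨r, hr⟩ := h
        exact ⟨r + 1, by omega⟩

theorem MWPPos_iff_MWQ : ∀ (n : ℕ) (s : Finset ℕ), s.sum id = n → 2 ≤ s.card →
    (MWPPos s ↔ MWQ s) := by
  intro n
  induction n using Nat.strong_induction_on with
  | _ n ih =>
    rintro s rfl hcard
    rw [MWPPos]
    constructor
    · intro hP
      by_contra hQ
      obtain ⟨t, hmv, hQt⟩ := MWQ_step2 hcard hQ
      exact hP t hmv ((ih _ hmv.sum_lt t rfl (hmv.card_eq ▸ hcard)).mpr hQt)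
    · intro hQ t hmv hPt
      exact MWQ_step1 hQ hmv ((ih _ hmv.sum_lt t rfl (hmv.card_eq ▸ hcard)).mp hPt)


/-- P-positions of Max-Welter. -/
theorem maxWelter_PPos_iff (k : ℕ) (hk : 2 ≤ k) (a : Fin k → ℕ) (ha : StrictMono a) :
    MWPPos (Finset.image a Finset.univ) ↔
      a ⟨k - 1, by omega⟩ = a ⟨k - 2, by omega⟩ + 1 ∧ Even (a ⟨k - 2, by omega⟩ + k) := by
  have hcard : (Finset.image a Finset.univ).card = k := by
    rw [Finset.card_image_of_injective _ ha.injective, Finset.card_univ, Fintype.card_fin]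
  rw [MWPPos_iff_MWQ _ _ rfl (by omega)]
  set A := a ⟨k - 2, by omega⟩ with hA
  set B := a ⟨k - 1, by omega⟩ with hB
  have hAB : A < B := ha (by simp [Fin.lt_def]; omega)
  have hBub : ∀ x ∈ Finset.image a Finset.univ, x ≤ B := by
    intro x hx
    obtain ⟨i, _, rfl⟩ := Finset.mem_image.mp hx
    exact ha.monotone (by simp [Fin.le_def]; omega)
  have hAub : ∀ x ∈ Finset.image a Finset.univ, x ≠ B → x ≤ A := by
    intro x hx hxB
    obtain ⟨i, _, rfl⟩ := Finset.mem_image.mp hx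
    have hik : i.val ≠ k - 1 := fun h => hxB (by rw [hB]; congr 1; exact Fin.ext h)
    have : i.val ≤ k - 1 := by omega
    exact ha.monotone (by simp [Fin.le_def]; omega)
  have hAmem : A ∈ Finset.image a Finset.univ := Finset.mem_image_of_mem a (Finset.mem_univ _)
  have hBmem : B ∈ Finset.image a Finset.univ := Finset.mem_image_of_mem a (Finset.mem_univ _)
  constructor
  · rintro ⟨m, hm, hm1, hub, hev⟩
    have h1 : m + 1 = B := le_antisymm (hBub _ hm1) (hub _ hBmem)
    have h2 : m = A := by
      have hmA : m ≤ A := hAub _ hm (by omega)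
      have hAm := hub _ hAmem
      omega
    rw [hcard] at hev
    exact ⟨by omega, h2 ▸ hev⟩
  · rintro ⟨hBA, hev⟩
    exact ⟨A, hAmem, hBA ▸ hBmem, fun x hx => hBA ▸ hBub x hx, by rw [hcard]; exact hev⟩
end

section
/- In Max-Welter, if A = (a_1, ..., a_k) with k ≥ 3 and a_1 ≤ k - 1, then the coin on square a_1 can never be moved during any play of the game starting from A. -/
/-- if a_1 ≤ k-1 then the coin on square a_1 can never be moved:
the square a_1 stays occupied in every reachable position. -/
theorem maxWelter_low_coin_frozen (k : ℕ) (hk : 3 ≤ k) (a : Fin k → ℕ)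
    (ha : StrictMono a) (h1 : a ⟨0, by omega⟩ ≤ k - 1) :
    ∀ t, Relation.ReflTransGen MWMove (Finset.image a Finset.univ) t →
      a ⟨0, by omega⟩ ∈ t := by
  set a1 := a ⟨0, by omega⟩ with ha1
  suffices H : ∀ t, Relation.ReflTransGen MWMove (Finset.image a Finset.univ) t →
      a1 ∈ t ∧ t.card = k from fun t ht => (H t ht).1
  intro t ht
  induction ht with
  | refl =>
    constructor
    · exact Finset.mem_image_of_mem a (Finset.mem_univ _)
    · rw [Finset.card_image_of_injective _ ha.injective, Finset.card_univ, Fintype.card_fin]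
  | @tail b c _hab hmove ih =>
    obtain ⟨hm, hcard⟩ := ih
    obtain ⟨hs, j, hj, hjs, rfl⟩ := hmove
    have hmax : b.max' hs ∈ b := b.max'_mem hs
    have hje : j ∉ b.erase (b.max' hs) := fun hc => hjs (Finset.mem_of_mem_erase hc)
    have hcard' : (insert j (b.erase (b.max' hs))).card = k := by
      rw [Finset.card_insert_of_notMem hje, Finset.card_erase_of_mem hmax, hcard]
      omega
    refine ⟨?_, hcard'⟩
    by_cases hM : b.max' hs = a1
    · exfalso
      have hsub : b ⊆ Finset.range (a1 + 1) := by
        intro x hx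
        rw [Finset.mem_range]
        have := Finset.le_max' b x hx
        omega
      have hle : k ≤ a1 + 1 := by
        have := Finset.card_le_card hsub
        rw [hcard, Finset.card_range] at this
        exact this
      have heq : b = Finset.range (a1 + 1) :=
        Finset.eq_of_subset_of_card_le hsub (by rw [Finset.card_range, hcard]; omega)
      have : j ∈ b := by rw [heq, Finset.mem_range]; omega
      exact hjs this
    · exact Finset.mem_insert_of_mem (Finset.mem_erase.mpr ⟨fun h => hM h.symm, hm⟩)
end

section
/- In Max-Welter, let a_1 < a_2 < ... < a_k with k ≥ 3 and a_k > a_{k-1} + 1. If there exists i ≤ k - 2 such that a_i ≥ k - 2 and a_i + 1 = a_{i+1}, then G(a_1 + 1, a_2 + 1, ..., a_k + 1) = G(a_1, a_2, ..., a_k), i.e., the Sprague-Grundy value is invariant under translating all coins one square to the right. -/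
/-! ### mex machinery -/

noncomputable def mexS (S : Set ℕ) : ℕ := sInf {n | n ∉ S}

theorem mexS_notMem {S : Set ℕ} (hS : S.Finite) : mexS S ∉ S := by
  have h : {n | n ∉ S}.Nonempty := by
    have := hS.infinite_compl
    exact this.nonempty
  exact Nat.sInf_mem h

theorem mem_of_lt_mexS {S : Set ℕ} {n : ℕ} (h : n < mexS S) : n ∈ S := by
  by_contra hn
  have : mexS S ≤ n := Nat.sInf_le hn
  omega

theorem mexS_eq_of {S : Set ℕ} (hS : S.Finite) {g : ℕ} (h0 : g ∉ S)
    (h1 : ∀ n < g, n ∈ S) : mexS S = g := by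
  have h2 : mexS S ≤ g := Nat.sInf_le h0
  rcases lt_or_eq_of_le h2 with h | h
  · exact absurd (h1 _ h) (mexS_notMem hS)
  · exact h

theorem mexS_Iio (n : ℕ) : mexS (Set.Iio n) = n :=
  mexS_eq_of (Set.finite_Iio n) (by simp) (by simp)

theorem mexS_empty : mexS (∅ : Set ℕ) = 0 :=
  mexS_eq_of (Set.finite_empty) (by simp) (by omega)

/-! ### option values -/

/-- values of positions obtained by putting the moving coin on an empty square `j < b`. -/
def W (C : Finset ℕ) (b : ℕ) : Set ℕ :=
  {n | ∃ j, j < b ∧ j ∉ C ∧ grundy (insert j C) = n}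

theorem W_finite (C : Finset ℕ) (b : ℕ) : (W C b).Finite := by
  have : W C b ⊆ (fun j => grundy (insert j C)) '' (Set.Iio b) := by
    rintro n ⟨j, hj, _, rfl⟩
    exact ⟨j, hj, rfl⟩
  exact Set.Finite.subset ((Set.finite_Iio b).image _) this

theorem W_mono (C : Finset ℕ) {b b' : ℕ} (h : b ≤ b') : W C b ⊆ W C b' := by
  rintro n ⟨j, hj, hjC, rfl⟩
  exact ⟨j, lt_of_lt_of_le hj h, hjC, rfl⟩

theorem W_succ {C : Finset ℕ} {b : ℕ} (hb : b ∉ C) :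
    W C (b + 1) = W C b ∪ {grundy (insert b C)} := by
  ext n
  constructor
  · rintro ⟨j, hj, hjC, rfl⟩
    rcases Nat.lt_or_ge j b with h | h
    · exact Or.inl ⟨j, h, hjC, rfl⟩
    · have : j = b := by omega
      subst this; exact Or.inr rfl
  · rintro (⟨j, hj, hjC, rfl⟩ | h)
    · exact ⟨j, by omega, hjC, rfl⟩
    · exact ⟨b, by omega, hb, h.symm⟩

theorem W_succ_mem {C : Finset ℕ} {b : ℕ} (hb : b ∈ C) :
    W C (b + 1) = W C b := by
  ext n
  constructor
  · rintro ⟨j, hj, hjC, rfl⟩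
    refine ⟨j, ?_, hjC, rfl⟩
    rcases Nat.lt_or_ge j b with h | h
    · exact h
    · have : j = b := by omega
      subst this
      exact absurd hb hjC
  · exact fun h => W_mono C (by omega) h

/-- key: grundy of a position written as `insert b B` with `b` strictly above `B`. -/
theorem grundy_insert {B : Finset ℕ} {b : ℕ} (hb : ∀ y ∈ B, y < b) :
    grundy (insert b B) = mexS (W B b) := by
  have hbB : b ∉ B := fun h => absurd (hb b h) (lt_irrefl b)
  have hne : (insert b B).Nonempty := Finset.insert_nonempty _ _
  have hmax : (insert b B).max' hne = b := by
    apply le_antisymm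
    · apply Finset.max'_le
      intro y hy
      rcases Finset.mem_insert.1 hy with rfl | hy
      · exact le_refl _
      · exact le_of_lt (hb y hy)
    · exact Finset.le_max' _ _ (Finset.mem_insert_self _ _)
  have herase : (insert b B).erase b = B := Finset.erase_insert hbB
  have hmv : ∀ t, MWMove (insert b B) t ↔ ∃ j, j < b ∧ j ∉ B ∧ t = insert j B := by
    intro t
    constructor
    · rintro ⟨hs, j, hj, hjs, rfl⟩
      have hmax' : (insert b B).max' hs = b := hmax
      rw [hmax'] at hj ⊢
      rw [herase]
      exact ⟨j, hj, fun h => hjs (Finset.mem_insert_of_mem h), rfl⟩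
    · rintro ⟨j, hj, hjB, rfl⟩
      refine ⟨hne, j, ?_, ?_, ?_⟩
      · rw [hmax]; exact hj
      · rw [Finset.mem_insert]; push_neg; exact ⟨by omega, hjB⟩
      · rw [hmax, herase]
  rw [grundy]
  have : {n : ℕ | ∀ t, ∀ _h : MWMove (insert b B) t, grundy t ≠ n} = {n | n ∉ W (insert b B |>.erase b) b} := by
    rw [herase]
    ext n
    simp only [Set.mem_setOf_eq, W]
    constructor
    · rintro h ⟨j, hj, hjB, rfl⟩
      exact h _ ((hmv _).2 ⟨j, hj, hjB, rfl⟩) rfl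
    · intro h t hmvt
      obtain ⟨j, hj, hjB, rfl⟩ := (hmv t).1 hmvt
      intro hval
      exact h ⟨j, hj, hjB, hval⟩
  rw [this, herase]
  rfl

/-! ### small helpers -/

theorem exists_lt_notMem (S : Finset ℕ) (c : ℕ) (h : (S.filter (· < c)).card < c) :
    ∃ i, i < c ∧ i ∉ S := by
  by_contra hcon
  push_neg at hcon
  have hsub : Finset.range c ⊆ S.filter (· < c) := by
    intro i hi
    have hic := Finset.mem_range.1 hi
    exact Finset.mem_filter.2 ⟨hcon i hic, by simpa using hic⟩
  have := Finset.card_le_card hsub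
  simp at this
  omega

theorem max'_eq_of {S : Finset ℕ} (hne : S.Nonempty) {b : ℕ} (hmem : b ∈ S)
    (hb : ∀ y ∈ S, y ≤ b) : S.max' hne = b :=
  le_antisymm (Finset.max'_le _ _ _ hb) (Finset.le_max' _ _ hmem)

/-! ### packed positions -/

theorem W_range {m : ℕ} : ∀ b, m ≤ b → W (Finset.range m) b = Set.Iio (b - m) := by
  intro b
  induction b with
  | zero =>
    intro _
    ext n
    simp only [W, Set.mem_setOf_eq, Set.mem_Iio]
    constructor
    · rintro ⟨j, hj, _⟩; omega
    · omega
  | succ b ihb =>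
    intro hm
    rcases Nat.lt_or_ge b m with h | h
    · ext n
      simp only [W, Set.mem_setOf_eq, Set.mem_Iio]
      constructor
      · rintro ⟨j, hj, hjr, _⟩
        exact absurd (Finset.mem_range.2 (by omega)) hjr
      · omega
    · have hb : b ∉ Finset.range m := by simp; omega
      rw [W_succ hb, ihb h]
      have hg : grundy (insert b (Finset.range m)) = b - m := by
        rw [grundy_insert (by intro y hy; simp at hy; omega), ihb h, mexS_Iio]
      rw [hg]
      ext n
      simp only [Set.mem_union, Set.mem_Iio, Set.mem_singleton_iff]
      omega

theorem grundy_range {m b : ℕ} (h : m ≤ b) :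
    grundy (insert b (Finset.range m)) = b - m := by
  rw [grundy_insert (by intro y hy; simp at hy; omega), W_range b h, mexS_Iio]

theorem eq_range_of_packed {D : Finset ℕ} (hne : D.Nonempty) (h : D.max' hne < D.card) :
    D = Finset.range D.card ∧ D.card = D.max' hne + 1 := by
  have hsub : D ⊆ Finset.range (D.max' hne + 1) := fun y hy =>
    Finset.mem_range.2 (by have := Finset.le_max' D y hy; omega)
  have hcard : D.card ≤ D.max' hne + 1 := by
    have := Finset.card_le_card hsub
    simpa using this
  have hEq : D.card = D.max' hne + 1 := by omega
  refine ⟨?_, hEq⟩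
  rw [hEq]
  exact Finset.eq_of_subset_of_card_le hsub (by simp [← hEq])

/-! ### the parity statement St2 -/

def ST2 (C : Finset ℕ) (hne : C.Nonempty) : Prop :=
  (0 ∈ W C (C.max' hne) ↔ (C.max' hne + C.card) % 2 = 0) ∧
  (1 ∈ W C (C.max' hne) ↔ (C.max' hne + C.card) % 2 = 1)

/-- adjacent-top value (parity lemma), conditional on ST2 for the bottom. -/
theorem H1 {D : Finset ℕ} (hne : D.Nonempty)
    (hst : D.card ≤ D.max' hne → ST2 D hne) :
    grundy (insert (D.max' hne + 1) D) =
      if (D.max' hne + D.card) % 2 = 0 then 1 else 0 := by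
  set d := D.max' hne with hd
  have hbound : ∀ y ∈ D, y < d + 1 := fun y hy => by
    have := Finset.le_max' D y hy; omega
  rw [grundy_insert hbound, W_succ_mem (hd ▸ D.max'_mem hne)]
  rcases Nat.lt_or_ge d D.card with hpacked | hun
  · -- packed
    obtain ⟨hrange, hcardEq⟩ := eq_range_of_packed hne hpacked
    have hW : W D d = ∅ := by
      ext n
      simp only [W, Set.mem_setOf_eq, Set.mem_empty_iff_false, iff_false]
      rintro ⟨j, hj, hjD, _⟩
      exact hjD (hrange ▸ Finset.mem_range.2 (by omega))
    rw [hW, mexS_empty]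
    have : (d + D.card) % 2 = 1 := by omega
    simp [this]
  · obtain ⟨h0, h1⟩ := hst hun
    rcases Nat.even_or_odd (d + D.card) with he | ho
    · have hpar : (d + D.card) % 2 = 0 := Nat.even_iff.1 he
      rw [if_pos hpar]
      refine mexS_eq_of (W_finite _ _) ?_ ?_
      · intro hmem
        have := h1.1 hmem
        omega
      · intro n hn
        have : n = 0 := by omega
        subst this
        exact h0.2 hpar
    · have hpar : (d + D.card) % 2 = 1 := Nat.odd_iff.1 ho
      rw [if_neg (by omega)]
      refine mexS_eq_of (W_finite _ _) ?_ (by omega)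
      intro hmem
      have := h0.1 hmem
      omega

/-- for an unpacked bottom and top at distance ≥ 2, both 0 and 1 occur among options. -/
theorem H2 {D : Finset ℕ} (hne : D.Nonempty)
    (hst : D.card ≤ D.max' hne → ST2 D hne) (hun : D.card ≤ D.max' hne)
    {b : ℕ} (hb : D.max' hne + 2 ≤ b) : 0 ∈ W D b ∧ 1 ∈ W D b := by
  set d := D.max' hne with hd
  have hd1 : d + 1 ∉ D := fun h => by have := Finset.le_max' D _ h; omega
  have hsub : W D (d + 2) ⊆ W D b := W_mono D (by omega)
  have hW2 : W D (d + 2) = W D (d + 1) ∪ {grundy (insert (d + 1) D)} := W_succ hd1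
  have hW1 : W D (d + 1) = W D d := W_succ_mem (hd ▸ D.max'_mem hne)
  have hval := H1 hne hst
  obtain ⟨h0, h1⟩ := hst hun
  rcases Nat.even_or_odd (d + D.card) with he | ho
  · have hpar : (d + D.card) % 2 = 0 := Nat.even_iff.1 he
    constructor
    · exact hsub (hW2 ▸ Or.inl (hW1 ▸ h0.2 hpar))
    · refine hsub (hW2 ▸ Or.inr ?_)
      rw [Set.mem_singleton_iff, hval, if_pos hpar]
  · have hpar : (d + D.card) % 2 = 1 := Nat.odd_iff.1 ho
    constructor
    · refine hsub (hW2 ▸ Or.inr ?_)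
      rw [Set.mem_singleton_iff, hval, if_neg (by omega)]
    · exact hsub (hW2 ▸ Or.inl (hW1 ▸ h1.2 hpar))

theorem H2' {D : Finset ℕ} (hne : D.Nonempty)
    (hst : D.card ≤ D.max' hne → ST2 D hne) (hun : D.card ≤ D.max' hne)
    {b : ℕ} (hb : D.max' hne + 2 ≤ b) : 2 ≤ grundy (insert b D) := by
  have hbound : ∀ y ∈ D, y < b := fun y hy => by
    have := Finset.le_max' D y hy; omega
  rw [grundy_insert hbound]
  obtain ⟨h0, h1⟩ := H2 hne hst hun hb
  have hnm := mexS_notMem (W_finite D b)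
  by_contra hcon
  interval_cases h : mexS (W D b)
  · exact hnm h0
  · exact hnm h1

/-! ### St2 : main parity/membership characterisation -/

theorem st2_aux : ∀ N : ℕ, ∀ C : Finset ℕ, C.sum id < N → ∀ (hne : C.Nonempty),
    C.card ≤ C.max' hne → ST2 C hne := by
  intro N
  induction N with
  | zero => intro C h; simp at h
  | succ N ih =>
    intro C hsum hne hun
    set c := C.max' hne with hc
    have hcm : c ∈ C := C.max'_mem hne
    have hcard1 : 1 ≤ C.card := Finset.card_pos.2 hne
    have hc1 : 1 ≤ c := le_trans hcard1 hun
    set Ch := C.erase c with hCh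
    have hChcard : Ch.card = C.card - 1 := Finset.card_erase_of_mem hcm
    have hChlt : ∀ y ∈ Ch, y < c := fun y hy =>
      lt_of_le_of_ne (Finset.le_max' C y (Finset.mem_of_mem_erase hy))
        (Finset.ne_of_mem_erase hy)
    have hsumC : Ch.sum id + c = C.sum id := Finset.sum_erase_add C id hcm
    have hjCh : ∀ j, j ∉ C → j ∉ Ch := fun j hj h => hj (Finset.mem_of_mem_erase h)
    have hins : ∀ j, insert j C = insert c (insert j Ch) := by
      intro j
      conv_lhs => rw [← Finset.insert_erase hcm]
      rw [Finset.insert_comm]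
    have hDcard : ∀ j, j ∉ C → (insert j Ch).card = C.card := by
      intro j hj
      rw [Finset.card_insert_of_notMem (hjCh j hj), hChcard]
      omega
    have hDsum : ∀ j, j < c → j ∉ C → (insert j Ch).sum id < N := by
      intro j hj hjC
      have hins' : (insert j Ch).sum id = j + Ch.sum id := Finset.sum_insert (hjCh j hjC)
      omega
    have val_top : ∀ j, j < c → j ∉ C → c - 1 ∈ insert j Ch →
        grundy (insert j C) = if (c + C.card) % 2 = 0 then 0 else 1 := by
      intro j hj hjC hmem
      have hDne : (insert j Ch).Nonempty := ⟨j, Finset.mem_insert_self _ _⟩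
      have hDmax : (insert j Ch).max' hDne = c - 1 := by
        refine max'_eq_of hDne hmem ?_
        intro y hy
        rcases Finset.mem_insert.1 hy with rfl | hy
        · omega
        · have := hChlt y hy; omega
      have hstD : (insert j Ch).card ≤ (insert j Ch).max' hDne → ST2 _ hDne :=
        fun hunD => ih _ (hDsum j hj hjC) hDne hunD
      have hval := H1 hDne hstD
      rw [hDmax] at hval
      have hc1' : c - 1 + 1 = c := by omega
      rw [hc1', hDcard j hjC] at hval
      rw [hins j, hval]
      by_cases hp : (c + C.card) % 2 = 0
      · rw [if_pos hp, if_neg (by omega)]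
      · rw [if_neg hp, if_pos (by omega)]
    have val_other : ∀ j, j < c → j ∉ C → c - 1 ∉ insert j Ch →
        2 ≤ grundy (insert j C) ∨
          (grundy (insert j C) = c - C.card ∧ C.card + 1 ≤ c) := by
      intro j hj hjC hnmem
      have hjne : j ≠ c - 1 := fun h => hnmem (h ▸ Finset.mem_insert_self _ _)
      have hc2 : 2 ≤ c := by omega
      have hDne : (insert j Ch).Nonempty := ⟨j, Finset.mem_insert_self _ _⟩
      have hDle : ∀ y ∈ insert j Ch, y ≤ c - 2 := by
        intro y hy
        have hyne : y ≠ c - 1 := fun h => hnmem (h ▸ hy)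
        rcases Finset.mem_insert.1 hy with rfl | hy'
        · omega
        · have := hChlt y hy'; omega
      have hDmax_le : (insert j Ch).max' hDne ≤ c - 2 :=
        Finset.max'_le _ _ _ hDle
      by_cases hunD : (insert j Ch).card ≤ (insert j Ch).max' hDne
      · left
        have h2 := H2' hDne (fun h => ih _ (hDsum j hj hjC) hDne h) hunD
          (b := c) (by omega)
        rw [hins j]
        exact h2
      · right
        push_neg at hunD
        obtain ⟨hrange, hcardeq⟩ := eq_range_of_packed hDne hunD
        have hcc : (insert j Ch).card = C.card := hDcard j hjC
        constructor
        · rw [hins j, hrange, hcc]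
          exact grundy_range hun
        · omega
    constructor
    · constructor
      · rintro ⟨j, hj, hjC, hval⟩
        by_cases hmem : c - 1 ∈ insert j Ch
        · have h := val_top j hj hjC hmem
          rw [hval] at h
          by_cases hp : (c + C.card) % 2 = 0
          · exact hp
          · rw [if_neg hp] at h; omega
        · rcases val_other j hj hjC hmem with h2 | ⟨hv, hle⟩
          · omega
          · omega
      · intro hpar
        by_cases hcm1 : c - 1 ∈ C
        · obtain ⟨j, hj, hjC⟩ := exists_lt_notMem C c (by
            have hsub : C.filter (· < c) ⊆ Ch := by
              intro y hy
              obtain ⟨hyC, hyc⟩ := Finset.mem_filter.1 hy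
              exact Finset.mem_erase.2 ⟨by omega, hyC⟩
            have := Finset.card_le_card hsub
            omega)
          refine ⟨j, hj, hjC, ?_⟩
          have hmem : c - 1 ∈ insert j Ch :=
            Finset.mem_insert_of_mem (Finset.mem_erase.2 ⟨by omega, hcm1⟩)
          rw [val_top j hj hjC hmem, if_pos hpar]
        · refine ⟨c - 1, by omega, hcm1, ?_⟩
          rw [val_top _ (by omega) hcm1 (Finset.mem_insert_self _ _), if_pos hpar]
    · constructor
      · rintro ⟨j, hj, hjC, hval⟩
        by_cases hmem : c - 1 ∈ insert j Ch
        · have h := val_top j hj hjC hmem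
          rw [hval] at h
          by_cases hp : (c + C.card) % 2 = 0
          · rw [if_pos hp] at h; omega
          · omega
        · rcases val_other j hj hjC hmem with h2 | ⟨hv, hle⟩
          · omega
          · omega
      · intro hpar
        by_cases hcm1 : c - 1 ∈ C
        · obtain ⟨j, hj, hjC⟩ := exists_lt_notMem C c (by
            have hsub : C.filter (· < c) ⊆ Ch := by
              intro y hy
              obtain ⟨hyC, hyc⟩ := Finset.mem_filter.1 hy
              exact Finset.mem_erase.2 ⟨by omega, hyC⟩
            have := Finset.card_le_card hsub
            omega)
          refine ⟨j, hj, hjC, ?_⟩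
          have hmem : c - 1 ∈ insert j Ch :=
            Finset.mem_insert_of_mem (Finset.mem_erase.2 ⟨by omega, hcm1⟩)
          rw [val_top j hj hjC hmem, if_neg (by omega)]
        · refine ⟨c - 1, by omega, hcm1, ?_⟩
          rw [val_top _ (by omega) hcm1 (Finset.mem_insert_self _ _), if_neg (by omega)]

theorem st2 (C : Finset ℕ) (hne : C.Nonempty) (hun : C.card ≤ C.max' hne) :
    ST2 C hne :=
  st2_aux (C.sum id + 1) C (by omega) hne hun

/-- adjacent-top parity lemma, unconditional. -/
theorem H1' {D : Finset ℕ} (hne : D.Nonempty) :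
    grundy (insert (D.max' hne + 1) D) =
      if (D.max' hne + D.card) % 2 = 0 then 1 else 0 :=
  H1 hne (fun h => st2 D hne h)

/-! ### STAR : a coin below a high adjacent pair is irrelevant (top gap ≥ 2) -/

theorem valH1 {D : Finset ℕ} (hDne : D.Nonempty) {t : ℕ}
    (hmax : D.max' hDne + 1 = t) :
    grundy (insert t D) = if (D.max' hDne + D.card) % 2 = 0 then 1 else 0 := by
  subst hmax
  exact H1' hDne

theorem star_aux : ∀ N : ℕ, ∀ (Xh : Finset ℕ) (b x j : ℕ),
    (insert b Xh).sum id < N →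
    (∀ y ∈ Xh, y + 2 ≤ b) → x ∈ Xh → x + 1 ∈ Xh → Xh.card ≤ x → j < x → j ∉ Xh →
    grundy (insert j (insert b Xh)) = grundy (insert b Xh) := by
  intro N
  induction N with
  | zero => intro Xh b x j h; simp at h
  | succ N ih =>
    intro Xh b x j hsum hb hx hx1 hxc hjx hjXh
    have hne : Xh.Nonempty := ⟨x, hx⟩
    set b2 := Xh.max' hne with hb2
    have hb2m : b2 ∈ Xh := Xh.max'_mem hne
    have hx1b2 : x + 1 ≤ b2 := Finset.le_max' _ _ hx1
    have hxb2 : x ≤ b2 - 1 := by omega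
    have hbb2 : b2 + 2 ≤ b := hb b2 hb2m
    have hbXh : b ∉ Xh := fun h => by have := hb b h; omega
    have hcard2 : 2 ≤ Xh.card := Finset.one_lt_card.2 ⟨x, hx, x + 1, hx1, by omega⟩
    set n' := Xh.card with hn'
    set Xt := Xh.erase b2 with hXt
    have hXh_eq : insert b2 Xt = Xh := Finset.insert_erase hb2m
    have hxXt : x ∈ Xt := Finset.mem_erase.2 ⟨by omega, hx⟩
    have hXtne : Xt.Nonempty := ⟨x, hxXt⟩
    have hXtlt : ∀ y ∈ Xt, y < b2 := fun y hy =>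
      lt_of_le_of_ne (Finset.le_max' _ y (Finset.mem_of_mem_erase hy))
        (Finset.ne_of_mem_erase hy)
    have hXtcard : Xt.card = n' - 1 := Finset.card_erase_of_mem hb2m
    have hXtsub : ∀ {y : ℕ}, y ∉ Xh → y ∉ Xt := fun hy h =>
      hy (Finset.mem_of_mem_erase h)
    have hsum_eq : (insert b Xh).sum id = b + Xh.sum id := Finset.sum_insert hbXh
    have hsumXh : Xt.sum id + b2 = Xh.sum id := Finset.sum_erase_add Xh id hb2m
    have hjb2 : j + 2 ≤ b2 := by omega
    -- bounds for grundy_insert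
    have hbnd : ∀ y ∈ Xh, y < b := fun y hy => by have := hb y hy; omega
    have hbndj : ∀ y ∈ insert j Xh, y < b := by
      intro y hy
      rcases Finset.mem_insert.1 hy with rfl | hy
      · omega
      · exact hbnd y hy
    -- value of top-adjacent slot on the X side
    have vX_top : grundy (insert (b2 + 1) Xh) =
        if (b2 + n') % 2 = 0 then 1 else 0 := valH1 hne rfl
    -- value of top-adjacent slot on the X+j side
    have hneJ : (insert j Xh).Nonempty := Finset.insert_nonempty _ _
    have hmaxJ : (insert j Xh).max' hneJ = b2 := by
      refine max'_eq_of hneJ (Finset.mem_insert_of_mem hb2m) ?_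
      intro y hy
      rcases Finset.mem_insert.1 hy with rfl | hy
      · omega
      · exact Finset.le_max' _ y hy
    have hcardJ : (insert j Xh).card = n' + 1 := Finset.card_insert_of_notMem hjXh
    have vXj_top : grundy (insert (b2 + 1) (insert j Xh)) =
        if (b2 + n' + 1) % 2 = 0 then 1 else 0 := by
      have := valH1 hneJ (t := b2 + 1) (by rw [hmaxJ])
      rw [hmaxJ, hcardJ] at this
      rw [this]
      by_cases hp : (b2 + n' + 1) % 2 = 0
      · rw [if_pos (by omega), if_pos hp]
      · rw [if_neg (by omega), if_neg hp]
    -- value of a second-adjacent slot on the X side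
    have vX_sec : ∀ i, i < b2 → i ∉ Xh → b2 - 1 ∈ insert i Xt →
        grundy (insert i Xh) = if (b2 + n' + 1) % 2 = 0 then 1 else 0 := by
      intro i hib2 hiXh hmem
      have hDne : (insert i Xt).Nonempty := Finset.insert_nonempty _ _
      have hDmax : (insert i Xt).max' hDne = b2 - 1 := by
        refine max'_eq_of hDne hmem ?_
        intro y hy
        rcases Finset.mem_insert.1 hy with rfl | hy
        · omega
        · have := hXtlt y hy; omega
      have hDcard : (insert i Xt).card = n' := by
        rw [Finset.card_insert_of_notMem (hXtsub hiXh), hXtcard]; omega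
      have hpos : insert i Xh = insert b2 (insert i Xt) := by
        rw [← hXh_eq, Finset.insert_comm]
      have := valH1 hDne (t := b2) (by rw [hDmax]; omega)
      rw [hDmax, hDcard] at this
      rw [hpos, this]
      by_cases hp : (b2 + n' + 1) % 2 = 0
      · rw [if_pos (by omega), if_pos hp]
      · rw [if_neg (by omega), if_neg hp]
    -- value of a second-adjacent slot on the X+j side
    have vXj_sec : ∀ i, i < b2 → i ∉ Xh → i ≠ j → b2 - 1 ∈ insert i Xt →
        grundy (insert i (insert j Xh)) = if (b2 + n') % 2 = 0 then 1 else 0 := by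
      intro i hib2 hiXh hij hmem
      have hjXt : j ∉ Xt := hXtsub hjXh
      have hiJT : i ∉ insert j Xt := by
        rw [Finset.mem_insert]; push_neg; exact ⟨hij, hXtsub hiXh⟩
      have hDne : (insert i (insert j Xt)).Nonempty := Finset.insert_nonempty _ _
      have hmem' : b2 - 1 ∈ insert i (insert j Xt) := by
        rcases Finset.mem_insert.1 hmem with h | h
        · exact h ▸ Finset.mem_insert_self _ _
        · exact Finset.mem_insert_of_mem (Finset.mem_insert_of_mem h)
      have hDmax : (insert i (insert j Xt)).max' hDne = b2 - 1 := by
        refine max'_eq_of hDne hmem' ?_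
        intro y hy
        rcases Finset.mem_insert.1 hy with rfl | hy
        · omega
        · rcases Finset.mem_insert.1 hy with rfl | hy
          · omega
          · have := hXtlt y hy; omega
      have hDcard : (insert i (insert j Xt)).card = n' + 1 := by
        rw [Finset.card_insert_of_notMem hiJT, Finset.card_insert_of_notMem hjXt,
          hXtcard]
        omega
      have hpos : insert i (insert j Xh) = insert b2 (insert i (insert j Xt)) := by
        rw [← hXh_eq, Finset.insert_comm j b2, Finset.insert_comm i b2]
      have := valH1 hDne (t := b2) (by rw [hDmax]; omega)
      rw [hDmax, hDcard] at this
      rw [hpos, this]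
      by_cases hp : (b2 + n') % 2 = 0
      · rw [if_pos (by omega), if_pos hp]
      · rw [if_neg (by omega), if_neg hp]
    -- IH for slots strictly above b2+1
    have vIH_high : ∀ i, b2 + 2 ≤ i → i < b → i ∉ Xh →
        grundy (insert j (insert i Xh)) = grundy (insert i Xh) := by
      intro i hi2 hib hiXh
      refine ih Xh i x j ?_ (fun y hy => by have := Finset.le_max' _ y hy; omega)
        hx hx1 hxc hjx hjXh
      have : (insert i Xh).sum id = i + Xh.sum id := Finset.sum_insert hiXh
      omega
    -- IH for low slots with second gap ≥ 2
    have vIH_low : ∀ i j'', i < b2 → i ∉ Xh → b2 - 1 ∉ insert i Xt →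
        j'' < x → j'' ∉ Xh → j'' ≠ i →
        grundy (insert j'' (insert i Xh)) = grundy (insert i Xh) := by
      intro i j'' hib2 hiXh hnm hj''x hj''Xh hj''i
      have hx1ne : x + 1 ≠ b2 := by
        intro h
        exact hnm (Finset.mem_insert_of_mem (by rw [← h]; simpa using hxXt))
      have hx1Xt : x + 1 ∈ Xt := Finset.mem_erase.2 ⟨hx1ne, hx1⟩
      have hbound : ∀ y ∈ insert i Xt, y + 2 ≤ b2 := by
        intro y hy
        have hyne : y ≠ b2 - 1 := fun h => hnm (h ▸ hy)
        rcases Finset.mem_insert.1 hy with rfl | hy'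
        · omega
        · have := hXtlt y hy'; omega
      have hcard : (insert i Xt).card ≤ x := by
        rw [Finset.card_insert_of_notMem (hXtsub hiXh), hXtcard]; omega
      have hsum' : (insert b2 (insert i Xt)).sum id < N := by
        have h1 : b2 ∉ insert i Xt := by
          rw [Finset.mem_insert]; push_neg
          exact ⟨by omega, fun h => by have := hXtlt _ h; omega⟩
        have h2 : (insert b2 (insert i Xt)).sum id = b2 + (insert i Xt).sum id :=
          Finset.sum_insert h1
        have h3 : (insert i Xt).sum id = i + Xt.sum id :=
          Finset.sum_insert (hXtsub hiXh)
        omega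
      have hIH := ih (insert i Xt) b2 x j'' hsum' hbound
        (Finset.mem_insert_of_mem hxXt) (Finset.mem_insert_of_mem hx1Xt) hcard
        hj''x (by rw [Finset.mem_insert]; push_neg; exact ⟨hj''i, hXtsub hj''Xh⟩)
      have hpos : insert b2 (insert i Xt) = insert i Xh := by
        rw [← hXh_eq, Finset.insert_comm]
      rw [hpos] at hIH
      exact hIH
    -- existence of a second-adjacent slot on the X side
    have ex_sec_X : ∃ i, i < b2 ∧ i ∉ Xh ∧ b2 - 1 ∈ insert i Xt := by
      by_cases h : b2 - 1 ∈ Xh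
      · have hmem : b2 - 1 ∈ Xt := Finset.mem_erase.2 ⟨by omega, h⟩
        obtain ⟨i, hi, hiXh⟩ := exists_lt_notMem Xh b2 (by
          have hsub : Xh.filter (· < b2) ⊆ Xt := by
            intro y hy
            obtain ⟨h1, h2⟩ := Finset.mem_filter.1 hy
            exact Finset.mem_erase.2 ⟨by omega, h1⟩
          have := Finset.card_le_card hsub
          omega)
        exact ⟨i, hi, hiXh, Finset.mem_insert_of_mem hmem⟩
      · exact ⟨b2 - 1, by omega, h, Finset.mem_insert_self _ _⟩
    -- existence of a second-adjacent slot on the X+j side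
    have ex_sec_Xj : ∃ i, i < b2 ∧ i ∉ Xh ∧ i ≠ j ∧ b2 - 1 ∈ insert i Xt := by
      by_cases h : b2 - 1 ∈ Xh
      · have hmem : b2 - 1 ∈ Xt := Finset.mem_erase.2 ⟨by omega, h⟩
        obtain ⟨i, hi, hiJ⟩ := exists_lt_notMem (insert j Xh) b2 (by
          have hsub : (insert j Xh).filter (· < b2) ⊆ insert j Xt := by
            intro y hy
            obtain ⟨h1, h2⟩ := Finset.mem_filter.1 hy
            rcases Finset.mem_insert.1 h1 with rfl | h1
            · exact Finset.mem_insert_self _ _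
            · exact Finset.mem_insert_of_mem (Finset.mem_erase.2 ⟨by omega, h1⟩)
          have h4 := Finset.card_le_card hsub
          have h5 : (insert j Xt).card ≤ Xt.card + 1 := Finset.card_insert_le _ _
          omega)
        rw [Finset.mem_insert] at hiJ
        push_neg at hiJ
        exact ⟨i, hi, hiJ.2, hiJ.1, Finset.mem_insert_of_mem hmem⟩
      · refine ⟨b2 - 1, by omega, h, by omega, Finset.mem_insert_self _ _⟩
    -- existence of a spare slot below x
    have ex_istar : ∃ i, i < x ∧ i ∉ Xh ∧ i ≠ j := by
      obtain ⟨i, hi, hiJ⟩ := exists_lt_notMem (insert j Xh) x (by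
        have hsub : (insert j Xh).filter (· < x) ⊆
            insert j ((Xh.erase (x + 1)).erase x) := by
          intro y hy
          obtain ⟨h1, h2⟩ := Finset.mem_filter.1 hy
          rcases Finset.mem_insert.1 h1 with rfl | h1
          · exact Finset.mem_insert_self _ _
          · refine Finset.mem_insert_of_mem (Finset.mem_erase.2 ⟨by omega,
              Finset.mem_erase.2 ⟨by omega, h1⟩⟩)
        have h4 := Finset.card_le_card hsub
        have h5 : (insert j ((Xh.erase (x + 1)).erase x)).card ≤
            ((Xh.erase (x + 1)).erase x).card + 1 := Finset.card_insert_le _ _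
        have h6 : (Xh.erase (x + 1)).card = n' - 1 := Finset.card_erase_of_mem hx1
        have h7 : ((Xh.erase (x + 1)).erase x).card = n' - 2 := by
          rw [Finset.card_erase_of_mem (Finset.mem_erase.2 ⟨by omega, hx⟩), h6]
          omega
        omega)
      rw [Finset.mem_insert] at hiJ
      push_neg at hiJ
      exact ⟨i, hi, hiJ.2, hiJ.1⟩
    -- reduce to equality of option-value sets
    have hgoal : insert j (insert b Xh) = insert b (insert j Xh) :=
      Finset.insert_comm _ _ _
    rw [hgoal, grundy_insert hbndj, grundy_insert hbnd]
    refine congrArg mexS (Set.Subset.antisymm ?_ ?_)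
    · -- W (insert j Xh) b ⊆ W Xh b
      rintro n ⟨i, hib, hiJ, rfl⟩
      rw [Finset.mem_insert] at hiJ
      push_neg at hiJ
      obtain ⟨hij, hiXh⟩ := hiJ
      have hib2ne : i ≠ b2 := fun h => hiXh (h ▸ hb2m)
      by_cases hi_gt : b2 + 2 ≤ i
      · refine ⟨i, hib, hiXh, ?_⟩
        rw [Finset.insert_comm]
        exact (vIH_high i hi_gt hib hiXh).symm
      · by_cases hi_eq : i = b2 + 1
        · subst hi_eq
          obtain ⟨i2, hi2b2, hi2Xh, hi2mem⟩ := ex_sec_X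
          refine ⟨i2, by omega, hi2Xh, ?_⟩
          rw [vX_sec i2 hi2b2 hi2Xh hi2mem, vXj_top]
        · have hib2 : i < b2 := by omega
          by_cases hmem : b2 - 1 ∈ insert i Xt
          · refine ⟨b2 + 1, by omega, fun h => by have := Finset.le_max' _ _ h; omega, ?_⟩
            rw [vX_top, vXj_sec i hib2 hiXh hij hmem]
          · refine ⟨i, hib, hiXh, ?_⟩
            rw [Finset.insert_comm]
            exact (vIH_low i j hib2 hiXh hmem hjx hjXh (by omega)).symm
    · -- W Xh b ⊆ W (insert j Xh) b
      rintro n ⟨i, hib, hiXh, rfl⟩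
      have hib2ne : i ≠ b2 := fun h => hiXh (h ▸ hb2m)
      by_cases hi_gt : b2 + 2 ≤ i
      · have hijne : i ≠ j := by omega
        refine ⟨i, hib, by rw [Finset.mem_insert]; push_neg; exact ⟨hijne, hiXh⟩, ?_⟩
        rw [← Finset.insert_comm]
        exact (vIH_high i hi_gt hib hiXh)
      · by_cases hi_eq : i = b2 + 1
        · subst hi_eq
          obtain ⟨i2, hi2b2, hi2Xh, hi2j, hi2mem⟩ := ex_sec_Xj
          refine ⟨i2, by omega, by rw [Finset.mem_insert]; push_neg; exact ⟨hi2j, hi2Xh⟩, ?_⟩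
          rw [vXj_sec i2 hi2b2 hi2Xh hi2j hi2mem, vX_top]
        · have hib2 : i < b2 := by omega
          by_cases hieqj : i = j
          · subst hieqj
            by_cases hmem : b2 - 1 ∈ insert i Xt
            · refine ⟨b2 + 1, by omega,
                by rw [Finset.mem_insert]; push_neg;
                   exact ⟨by omega, fun h => by have := Finset.le_max' _ _ h; omega⟩, ?_⟩
              rw [vXj_top, vX_sec i hib2 hiXh hmem]
            · obtain ⟨i2, hi2x, hi2Xh, hi2j⟩ := ex_istar
              refine ⟨i2, by omega,
                by rw [Finset.mem_insert]; push_neg; exact ⟨hi2j, hi2Xh⟩, ?_⟩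
              exact vIH_low i i2 hib2 hiXh hmem hi2x hi2Xh hi2j
          · by_cases hmem : b2 - 1 ∈ insert i Xt
            · refine ⟨b2 + 1, by omega,
                by rw [Finset.mem_insert]; push_neg;
                   exact ⟨by omega, fun h => by have := Finset.le_max' _ _ h; omega⟩, ?_⟩
              rw [vXj_top, vX_sec i hib2 hiXh hmem]
            · refine ⟨i, hib,
                by rw [Finset.mem_insert]; push_neg; exact ⟨hieqj, hiXh⟩, ?_⟩
              rw [← Finset.insert_comm]
              exact vIH_low i j hib2 hiXh hmem hjx hjXh (by omega)

theorem star {Xh : Finset ℕ} {b x j : ℕ}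
    (hb : ∀ y ∈ Xh, y + 2 ≤ b) (hx : x ∈ Xh) (hx1 : x + 1 ∈ Xh)
    (hxc : Xh.card ≤ x) (hjx : j < x) (hjXh : j ∉ Xh) :
    grundy (insert j (insert b Xh)) = grundy (insert b Xh) :=
  star_aux ((insert b Xh).sum id + 1) Xh b x j (by omega) hb hx hx1 hxc hjx hjXh

/-! ### shift identity: a coin at 0 plus a global shift is irrelevant -/

theorem grundy_empty : grundy (∅ : Finset ℕ) = 0 := by
  rw [grundy]
  apply Nat.sInf_eq_zero.2
  left
  intro t ht
  obtain ⟨hs, -⟩ := ht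
  exact absurd hs Finset.not_nonempty_empty

theorem shift0_aux : ∀ N : ℕ, ∀ s : Finset ℕ, s.sum id < N →
    grundy (insert 0 (s.image (· + 1))) = grundy s := by
  intro N
  induction N with
  | zero => intro s h; simp at h
  | succ N ih =>
    intro s hsum
    rcases s.eq_empty_or_nonempty with rfl | hs
    · rw [Finset.image_empty, grundy_empty]
      have : grundy (insert 0 (∅ : Finset ℕ)) = mexS (W ∅ 0) :=
        grundy_insert (by simp)
      rw [this]
      have : W (∅ : Finset ℕ) 0 = ∅ := by
        ext n
        simp only [W, Set.mem_setOf_eq, Set.mem_empty_iff_false, iff_false]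
        rintro ⟨j, hj, -⟩
        omega
      rw [this, mexS_empty]
    · set b := s.max' hs with hb
      have hbm : b ∈ s := s.max'_mem hs
      set sh := s.erase b with hsh
      have hsE : insert b sh = s := Finset.insert_erase hbm
      have hshlt : ∀ y ∈ sh, y < b := fun y hy =>
        lt_of_le_of_ne (Finset.le_max' _ y (Finset.mem_of_mem_erase hy))
          (Finset.ne_of_mem_erase hy)
      have hsum' : sh.sum id + b = s.sum id := Finset.sum_erase_add s id hbm
      set M := sh.image (· + 1) with hM
      have himg : s.image (· + 1) = insert (b + 1) M := by
        rw [← hsE, Finset.image_insert]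
      have hpos : insert 0 (s.image (· + 1)) = insert (b + 1) (insert 0 M) := by
        rw [himg, Finset.insert_comm]
      have hbnd1 : ∀ y ∈ insert 0 M, y < b + 1 := by
        intro y hy
        rcases Finset.mem_insert.1 hy with rfl | hy
        · omega
        · obtain ⟨z, hz, rfl⟩ := Finset.mem_image.1 hy
          have := hshlt z hz
          omega
      rw [hpos, grundy_insert hbnd1, ← hsE, grundy_insert hshlt]
      refine congrArg mexS ?_
      ext n
      constructor
      · rintro ⟨j, hj, hjM, rfl⟩
        have hj0 : j ≠ 0 := fun h => hjM (h ▸ Finset.mem_insert_self _ _)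
        set i := j - 1 with hi
        have hji : j = i + 1 := by omega
        have hish : i ∉ sh := fun h => hjM
          (Finset.mem_insert_of_mem (Finset.mem_image.2 ⟨i, h, by omega⟩))
        refine ⟨i, by omega, hish, ?_⟩
        have hrw : insert j (insert 0 M) = insert 0 ((insert i sh).image (· + 1)) := by
          rw [Finset.image_insert, Finset.insert_comm, hji]
        have hsum2 : (insert i sh).sum id < N := by
          have : (insert i sh).sum id = i + sh.sum id := Finset.sum_insert hish
          omega
        rw [hrw] at *
        exact (ih (insert i sh) hsum2).symm
      · rintro ⟨i, hib, hish, rfl⟩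
        refine ⟨i + 1, by omega, ?_, ?_⟩
        · intro hmem
          rcases Finset.mem_insert.1 hmem with h | h
          · omega
          · obtain ⟨z, hz, hzz⟩ := Finset.mem_image.1 h
            have : z = i := by omega
            exact hish (this ▸ hz)
        · have hrw : insert (i + 1) (insert 0 M) =
              insert 0 ((insert i sh).image (· + 1)) := by
            rw [Finset.image_insert, Finset.insert_comm]
          have hsum2 : (insert i sh).sum id < N := by
            have : (insert i sh).sum id = i + sh.sum id := Finset.sum_insert hish
            omega
          rw [hrw]
          exact ih (insert i sh) hsum2
 
theorem shift0 (s : Finset ℕ) :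
    grundy (insert 0 (s.image (· + 1))) = grundy s :=
  shift0_aux (s.sum id + 1) s (by omega)


set_option maxHeartbeats 1000000 in
/-- translation invariance when two neighbouring coins exist among
the first k-2 with a_i ≥ k-2. -/
theorem maxWelter_translation_invariant (k : ℕ) (hk : 3 ≤ k) (a : Fin k → ℕ)
    (ha : StrictMono a)
    (hlast : a ⟨k - 2, by omega⟩ + 1 < a ⟨k - 1, by omega⟩)
    (hex : ∃ i : ℕ, ∃ _h1 : 1 ≤ i, ∃ _h2 : i ≤ k - 2,
      k - 2 ≤ a ⟨i - 1, by omega⟩ ∧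
      a ⟨i - 1, by omega⟩ + 1 = a ⟨i, by omega⟩) :
    grundy (Finset.image (fun j => a j + 1) Finset.univ) =
      grundy (Finset.image a Finset.univ) := by
  obtain ⟨i, h1, h2, hge, hadj⟩ := hex
  -- canonical Fin indices
  obtain ⟨pk1, hpk1⟩ : ∃ p : Fin k, (p : ℕ) = k - 1 := ⟨⟨k - 1, by omega⟩, rfl⟩
  obtain ⟨pk2, hpk2⟩ : ∃ p : Fin k, (p : ℕ) = k - 2 := ⟨⟨k - 2, by omega⟩, rfl⟩
  obtain ⟨pi1, hpi1⟩ : ∃ p : Fin k, (p : ℕ) = i - 1 := ⟨⟨i - 1, by omega⟩, rfl⟩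
  obtain ⟨pi0, hpi0⟩ : ∃ p : Fin k, (p : ℕ) = i := ⟨⟨i, by omega⟩, rfl⟩
  have hlast' : a pk2 + 1 < a pk1 := by
    rw [show pk2 = ⟨k - 2, by omega⟩ from Fin.ext hpk2,
      show pk1 = ⟨k - 1, by omega⟩ from Fin.ext hpk1]
    exact hlast
  have hge' : k - 2 ≤ a pi1 := by
    rw [show pi1 = ⟨i - 1, by omega⟩ from Fin.ext hpi1]
    exact hge
  have hadj' : a pi1 + 1 = a pi0 := by
    rw [show pi1 = ⟨i - 1, by omega⟩ from Fin.ext hpi1,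
      show pi0 = ⟨i, by omega⟩ from Fin.ext hpi0]
    exact hadj
  obtain ⟨s, hs⟩ : ∃ s, s = Finset.image a Finset.univ := ⟨_, rfl⟩
  obtain ⟨X, hX⟩ : ∃ X, X = Finset.image (fun j => a j + 1) Finset.univ := ⟨_, rfl⟩
  rw [← hs, ← hX]
  have hXs : s.image (· + 1) = X := by
    rw [hs, hX, Finset.image_image]
    rfl
  have hinj : Function.Injective a := ha.injective
  have hcards : s.card = k := by
    rw [hs, Finset.card_image_of_injective _ hinj, Finset.card_univ, Fintype.card_fin]
  have hmemX : ∀ y, y ∈ X ↔ ∃ p : Fin k, a p + 1 = y := by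
    intro y
    rw [hX]
    simp
  obtain ⟨T, hT⟩ : ∃ T, T = a pk1 + 1 := ⟨_, rfl⟩
  have htopX : T ∈ X := (hmemX T).2 ⟨pk1, hT.symm⟩
  obtain ⟨E, hE⟩ : ∃ E, E = X.erase T := ⟨_, rfl⟩
  have hXtop : insert T E = X := by rw [hE]; exact Finset.insert_erase htopX
  have hamono : ∀ p : Fin k, (p : ℕ) ≠ k - 1 → a p ≤ a pk2 := by
    intro p hp
    apply ha.monotone
    have hplt := p.isLt
    exact Fin.le_def.2 (by omega)
  have hbound : ∀ y ∈ E, y + 2 ≤ T := by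
    intro y hy
    rw [hE] at hy
    obtain ⟨hyne, hyX⟩ := Finset.mem_erase.1 hy
    obtain ⟨p, rfl⟩ := (hmemX y).1 hyX
    have hpne : (p : ℕ) ≠ k - 1 := by
      intro hp
      apply hyne
      rw [hT]
      have : p = pk1 := Fin.ext (by omega)
      rw [this]
    have := hamono p hpne
    omega
  obtain ⟨x, hx_def⟩ : ∃ x, x = a pi1 + 1 := ⟨_, rfl⟩
  have hik : pi1 < pk1 := Fin.lt_def.2 (by omega)
  have hik2 : pi0 < pk1 := Fin.lt_def.2 (by omega)
  have hxE : x ∈ E := by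
    rw [hE]
    refine Finset.mem_erase.2 ⟨?_, (hmemX x).2 ⟨pi1, hx_def.symm⟩⟩
    have := ha hik
    omega
  have hx1E : x + 1 ∈ E := by
    rw [hE]
    refine Finset.mem_erase.2 ⟨?_, (hmemX (x + 1)).2 ⟨pi0, by omega⟩⟩
    have := ha hik2
    omega
  have hEcard : E.card = k - 1 := by
    rw [hE, Finset.card_erase_of_mem htopX, ← hXs,
      Finset.card_image_of_injective _ (add_left_injective 1), hcards]
  have hxc : E.card ≤ x := by omega
  have h0E : (0 : ℕ) ∉ E := by
    intro h
    rw [hE] at h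
    obtain ⟨p, hp⟩ := (hmemX 0).1 (Finset.mem_of_mem_erase h)
    omega
  have hstar := star hbound hxE hx1E hxc (show 0 < x by omega) h0E
  rw [hXtop] at hstar
  have hshift := shift0 s
  rw [hXs] at hshift
  rw [← hstar, hshift]
end
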